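/- arXiv:2601.12217 — 10 statements merged into one kernel-verified Lean document; each statement's English description precedes it below -/
import Mathlib

section
/- If A is an m-th order n-dimensional B-tensor, then for every index i in [n], the diagonal entry a_{ii...i} is strictly greater than max{0, a_{i i_2 ... i_m} : (i_2,...,i_m) ≠ (i,...,i)}. -/
open Finset

namespace TensorB

abbrev Tensor (n m : ℕ) := Fin n → (Fin (m-1) → Fin n) → ℝ

/-- The diagonal index tuple `(i,...,i)`. -/
def diag {n m : ℕ} (i : Fin n) : Fin (m-1) → Fin n := fun _ => i

/-- Sum of the `i`-th row of `A`. -/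
def rowSum {n m : ℕ} (A : Tensor n m) (i : Fin n) : ℝ :=
  ∑ j : Fin (m-1) → Fin n, A i j

/-- Off-diagonal index tuples of row `i`. -/
def offIdx (n m : ℕ) (i : Fin n) : Finset (Fin (m-1) → Fin n) :=
  Finset.univ.filter (fun j => j ≠ diag i)

/-- `γ_i^+(A) = max {0, off-diagonal entries of row i}`. -/
def gammaPlus {n m : ℕ} (A : Tensor n m) (i : Fin n) : ℝ :=
  (offIdx n m i).fold max 0 (A i)

/-- B-tensor. -/
def IsBTensor {n m : ℕ} (A : Tensor n m) : Prop :=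
  ∀ i : Fin n, 0 < rowSum A i ∧
    ∀ j, j ≠ diag i → A i j < (1 / (n : ℝ) ^ (m - 1)) * rowSum A i

/-- The deficiency sum `Σ_{(i_2,...,i_m)≠(i,...,i)} (γ_i^+(A) − a_{i i_2...i_m})`. -/
def defSum {n m : ℕ} (A : Tensor n m) (i : Fin n) : ℝ :=
  ∑ j ∈ offIdx n m i, (gammaPlus A i - A i j)

/-- Double B-tensor. -/
def IsDoubleBTensor {n m : ℕ} (A : Tensor n m) : Prop :=
  ∀ i : Fin n,
    gammaPlus A i < A i (diag i) ∧
    defSum A i ≤ A i (diag i) - gammaPlus A i ∧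
    ∀ j, j ≠ i →
      defSum A i * defSum A j <
        (A i (diag i) - gammaPlus A i) * (A j (diag j) - gammaPlus A j)

/-- Z-tensor: all off-diagonal entries nonpositive. -/
def IsZTensor {n m : ℕ} (A : Tensor n m) : Prop :=
  ∀ i : Fin n, ∀ j, j ≠ diag i → A i j ≤ 0

/-- Strictly diagonally dominant tensor. -/
def IsSDD {n m : ℕ} (A : Tensor n m) : Prop :=
  ∀ i : Fin n, ∑ j ∈ offIdx n m i, |A i j| < A i (diag i)

/-- Circulant tensor. -/
def IsCirculant {n m : ℕ} [NeZero n] (A : Tensor n m) : Prop :=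
  ∀ (i : Fin n) (j : Fin (m-1) → Fin n), A i j = A (i + 1) (fun l => j l + 1)

/-- Membership in the interval tensor `[L, U]`. -/
def Mem {n m : ℕ} (L U A : Tensor n m) : Prop :=
  ∀ i j, L i j ≤ A i j ∧ A i j ≤ U i j

/-- Entrywise `L ≤ U`, so that `[L,U]` is a genuine interval tensor. -/
def IntervalValid {n m : ℕ} (L U : Tensor n m) : Prop :=
  ∀ i j, L i j ≤ U i j

theorem stmt0 {n m : ℕ} (A : Tensor n m) (hA : IsBTensor A) :
    ∀ i : Fin n, gammaPlus A i < A i (diag i) := by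
  intro i
  obtain ⟨hrow, hoff⟩ := hA i
  have hn : 0 < n := i.pos
  have hN : (0:ℝ) < (n:ℝ) ^ (m-1) := by positivity
  set c : ℝ := (1 / (n:ℝ) ^ (m-1)) * rowSum A i with hc
  have hcpos : 0 < c := by
    apply mul_pos _ hrow
    positivity
  have hγ : gammaPlus A i < c := by
    rw [gammaPlus, Finset.fold_max_lt]
    exact ⟨hcpos, fun j hj => hoff j (by simpa [offIdx] using hj)⟩
  have hoffeq : offIdx n m i = Finset.univ.erase (diag i) := by
    simp [offIdx, Finset.filter_ne']
  have hsplit : rowSum A i = A i (diag i) + ∑ j ∈ offIdx n m i, A i j := by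
    rw [rowSum, hoffeq, Finset.add_sum_erase _ _ (Finset.mem_univ _)]
  have hcard : (Finset.univ : Finset (Fin (m-1) → Fin n)).card = n ^ (m-1) := by
    simp [Fintype.card_fun]
  have hcardoff : (offIdx n m i).card = n ^ (m-1) - 1 := by
    rw [hoffeq, Finset.card_erase_of_mem (Finset.mem_univ _), hcard]
  have hNge1 : 1 ≤ n ^ (m-1) := Nat.one_le_iff_ne_zero.mpr (by positivity)
  rcases (offIdx n m i).eq_empty_or_nonempty with he | hne
  · have : rowSum A i = A i (diag i) := by rw [hsplit, he]; simp
    have hcle : c ≤ rowSum A i := by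
      rw [hc]
      have : 1 / (n:ℝ) ^ (m-1) ≤ 1 := by
        rw [div_le_one hN]
        exact_mod_cast hNge1
      nlinarith
    linarith [hγ, hcle, this ▸ hcle]
  · have hsum : ∑ j ∈ offIdx n m i, A i j < (offIdx n m i).card * c := by
      calc ∑ j ∈ offIdx n m i, A i j < ∑ _j ∈ offIdx n m i, c :=
        Finset.sum_lt_sum_of_nonempty hne (fun j hj => hoff j (by simpa [offIdx] using hj))
      _ = (offIdx n m i).card * c := by rw [Finset.sum_const, nsmul_eq_mul]
    have hcardR : ((offIdx n m i).card : ℝ) = (n:ℝ) ^ (m-1) - 1 := by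
      rw [hcardoff]
      push_cast [Nat.cast_sub hNge1]
      ring
    have hrowc : rowSum A i = (n:ℝ) ^ (m-1) * c := by
      rw [hc]; field_simp
    rw [hcardR] at hsum
    rw [hrowc] at hsplit
    nlinarith [hγ]

end TensorB
end

section
/- A tensor A ∈ T_{m,n} is a B-tensor if and only if for every i_1 ∈ [n], a_{i_1...i_1} − γ_{i_1}^+(A) > Σ_{(i_2,...,i_m)≠(i_1,...,i_1)} (γ_{i_1}^+(A) − a_{i_1 i_2...i_m}). -/
open Finset

namespace TensorB

lemma offIdx_eq {n m : ℕ} (i : Fin n) :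
    offIdx n m i = Finset.univ.erase (diag i) := by
  simp [offIdx, Finset.filter_ne']

lemma rowSum_split {n m : ℕ} (A : Tensor n m) (i : Fin n) :
    rowSum A i = A i (diag i) + ∑ j ∈ offIdx n m i, A i j := by
  rw [offIdx_eq, rowSum, ← Finset.add_sum_erase _ _ (Finset.mem_univ (diag i))]

lemma card_offIdx {n m : ℕ} (i : Fin n) :
    ((offIdx n m i).card : ℝ) = (n : ℝ) ^ (m - 1) - 1 := by
  have hn : 0 < n := i.pos
  have h1 : 1 ≤ n ^ (m - 1) := Nat.one_le_iff_ne_zero.2 (pow_ne_zero _ hn.ne')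
  rw [offIdx_eq, Finset.card_erase_of_mem (Finset.mem_univ _)]
  have : Fintype.card (Fin (m-1) → Fin n) = n ^ (m-1) := by
    simp [Fintype.card_fun]
  rw [Finset.card_univ, this, Nat.cast_sub h1]
  push_cast; ring

lemma defSum_eq {n m : ℕ} (A : Tensor n m) (i : Fin n) :
    defSum A i = ((n : ℝ) ^ (m - 1) - 1) * gammaPlus A i
      - (rowSum A i - A i (diag i)) := by
  rw [defSum, Finset.sum_sub_distrib, Finset.sum_const, nsmul_eq_mul, card_offIdx,
    rowSum_split A i]
  ring

lemma gammaPlus_nonneg {n m : ℕ} (A : Tensor n m) (i : Fin n) :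
    0 ≤ gammaPlus A i :=
  (Finset.le_fold_max _).2 (Or.inl le_rfl)

lemma le_gammaPlus {n m : ℕ} (A : Tensor n m) (i : Fin n) {j}
    (hj : j ≠ diag i) : A i j ≤ gammaPlus A i :=
  (Finset.le_fold_max _).2 (Or.inr ⟨j, by simp [offIdx, hj], le_rfl⟩)

theorem stmt2 {n m : ℕ} (A : Tensor n m) :
    IsBTensor A ↔ ∀ i : Fin n, defSum A i < A i (diag i) - gammaPlus A i := by
  constructor
  · intro h i
    obtain ⟨hpos, hlt⟩ := h i
    have hN : (0:ℝ) < (n:ℝ) ^ (m-1) := by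
      have := i.pos; positivity
    have hγ : gammaPlus A i < (1 / (n : ℝ) ^ (m - 1)) * rowSum A i := by
      refine (Finset.fold_max_lt _).2 ⟨by positivity, fun j hj => ?_⟩
      exact hlt j (by simpa [offIdx] using hj)
    have : (n:ℝ) ^ (m-1) * gammaPlus A i < rowSum A i := by
      have := mul_lt_mul_of_pos_left hγ hN
      calc (n:ℝ) ^ (m-1) * gammaPlus A i
          < (n:ℝ) ^ (m-1) * ((1 / (n : ℝ) ^ (m - 1)) * rowSum A i) := this
        _ = rowSum A i := by field_simp
    rw [defSum_eq]; linarith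
  · intro h i
    have hi := h i
    rw [defSum_eq] at hi
    have hN : (0:ℝ) < (n:ℝ) ^ (m-1) := by
      have := i.pos; positivity
    have key : (n:ℝ) ^ (m-1) * gammaPlus A i < rowSum A i := by linarith
    have hγ0 := gammaPlus_nonneg A i
    have hpos : 0 < rowSum A i := lt_of_le_of_lt (by positivity) key
    refine ⟨hpos, fun j hj => ?_⟩
    have h1 : A i j ≤ gammaPlus A i := le_gammaPlus A i hj
    have h2 : gammaPlus A i < (1 / (n : ℝ) ^ (m - 1)) * rowSum A i := by
      rw [one_div, inv_mul_eq_div, lt_div_iff₀ hN, mul_comm]; exact key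
    exact lt_of_le_of_lt h1 h2


end TensorB
end

section
/- If A ∈ T_{m,n} is a Z-tensor (all off-diagonal entries a_{i_1 i_2...i_m} with (i_2,...,i_m) ≠ (i_1,...,i_1) are nonpositive), then the following are equivalent: (a) A is a B-tensor; (b) Σ_{i_2,...,i_m∈[n]} a_{i_1 i_2...i_m} > 0 for each i_1 ∈ [n]; (c) A is strictly diagonally dominant. -/
open Finset

namespace TensorB

theorem stmt3 {n m : ℕ} (A : Tensor n m) (hZ : IsZTensor A) :
    (IsBTensor A ↔ ∀ i : Fin n, 0 < rowSum A i) ∧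
    ((∀ i : Fin n, 0 < rowSum A i) ↔ IsSDD A) := by
  have hsplit : ∀ i : Fin n, rowSum A i = A i (diag i) + ∑ j ∈ offIdx n m i, A i j := by
    intro i
    rw [rowSum, offIdx, Finset.filter_ne',
      ← Finset.add_sum_erase _ _ (Finset.mem_univ (diag i))]
  constructor
  · constructor
    · intro hB i; exact (hB i).1
    · intro h i
      refine ⟨h i, fun j hj => ?_⟩
      have hn : (0:ℝ) < (n : ℝ) ^ (m-1) := by
        have : 0 < n := i.pos
        positivity
      have := hZ i j hj
      have : A i j ≤ 0 := this
      have hpos : 0 < (1 / (n : ℝ) ^ (m - 1)) * rowSum A i := by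
        apply mul_pos _ (h i)
        positivity
      linarith
  · constructor
    · intro h i
      have habs : ∑ j ∈ offIdx n m i, |A i j| = -∑ j ∈ offIdx n m i, A i j := by
        rw [← Finset.sum_neg_distrib]
        apply Finset.sum_congr rfl
        intro j hj
        rw [abs_of_nonpos (hZ i j (Finset.mem_filter.mp hj).2)]
      have := h i
      rw [hsplit i] at this
      rw [habs]; linarith
    · intro h i
      have habs : ∑ j ∈ offIdx n m i, |A i j| = -∑ j ∈ offIdx n m i, A i j := by
        rw [← Finset.sum_neg_distrib]
        apply Finset.sum_congr rfl
        intro j hj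
        rw [abs_of_nonpos (hZ i j (Finset.mem_filter.mp hj).2)]
      have := h i
      rw [habs] at this
      rw [hsplit i]; linarith


end TensorB
end

section
/- Every B-tensor in T_{m,n} is a double B-tensor. -/
open Finset

namespace TensorB

lemma fold_max_cases {α : Type*} [DecidableEq α] (s : Finset α) (f : α → ℝ) :
    s.fold max 0 f = 0 ∨ ∃ x ∈ s, s.fold max 0 f = f x := by
  induction s using Finset.induction_on with
  | empty => left; simp
  | @insert a s h ih =>
    rw [Finset.fold_insert h]
    rcases le_total (f a) (s.fold max 0 f) with hle | hle
    · rw [max_eq_right hle]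
      rcases ih with h0 | ⟨x, hx, hfx⟩
      · left; exact h0
      · right; exact ⟨x, Finset.mem_insert_of_mem hx, hfx⟩
    · right; exact ⟨a, Finset.mem_insert_self a s, max_eq_left hle⟩

lemma key {n m : ℕ} (A : Tensor n m) (hA : IsBTensor A) (i : Fin n) :
    0 ≤ defSum A i ∧ defSum A i < A i (diag i) - gammaPlus A i := by
  have hγj : ∀ j ∈ offIdx n m i, A i j ≤ gammaPlus A i := by
    intro j hj
    unfold gammaPlus
    rw [Finset.le_fold_max]
    exact Or.inr ⟨j, hj, le_rfl⟩
  constructor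
  · exact Finset.sum_nonneg fun j hj => sub_nonneg.2 (hγj j hj)
  · have hn : 0 < n := i.pos
    have hN : (0:ℝ) < (n:ℝ) ^ (m-1) := by positivity
    have hcard : ((offIdx n m i).card : ℝ) + 1 = (n:ℝ) ^ (m-1) := by
      have h1 : (offIdx n m i).card + 1 = n ^ (m-1) := by
        unfold offIdx
        rw [Finset.filter_ne', Finset.card_erase_add_one (Finset.mem_univ _),
          Finset.card_univ, Fintype.card_fun, Fintype.card_fin, Fintype.card_fin]
      exact_mod_cast h1
    have hsplit : rowSum A i = A i (diag i) + ∑ j ∈ offIdx n m i, A i j := by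
      unfold rowSum offIdx
      rw [← Finset.sum_filter_add_sum_filter_not Finset.univ (fun j => j = diag i) (A i)]
      congr 1
      rw [Finset.filter_eq', if_pos (Finset.mem_univ _), Finset.sum_singleton]
    have hdef : defSum A i =
        ((offIdx n m i).card : ℝ) * gammaPlus A i - ∑ j ∈ offIdx n m i, A i j := by
      unfold defSum
      rw [Finset.sum_sub_distrib, Finset.sum_const, nsmul_eq_mul]
    have hB : ((n:ℝ))^(m-1) * gammaPlus A i < rowSum A i := by
      rcases fold_max_cases (offIdx n m i) (A i) with h0 | ⟨k, hk, hfk⟩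
      · have hg : gammaPlus A i = 0 := h0
        rw [hg, mul_zero]
        exact (hA i).1
      · have hk' : k ≠ diag i := (Finset.mem_filter.1 hk).2
        have hBk := (hA i).2 k hk'
        have hg : gammaPlus A i = A i k := hfk
        rw [hg]
        calc (n:ℝ)^(m-1) * A i k
            < (n:ℝ)^(m-1) * (1/(n:ℝ)^(m-1) * rowSum A i) :=
              mul_lt_mul_of_pos_left hBk hN
          _ = rowSum A i := by field_simp
    rw [hdef]
    rw [hsplit] at hB
    have hcg : ((offIdx n m i).card : ℝ) * gammaPlus A i
        = ((n:ℝ)^(m-1) - 1) * gammaPlus A i := by rw [← hcard]; ring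
    linarith [hcg, hB]

theorem stmt5 {n m : ℕ} (A : Tensor n m) (hA : IsBTensor A) : IsDoubleBTensor A := by
  intro i
  obtain ⟨h0, h1⟩ := key A hA i
  refine ⟨by linarith, le_of_lt h1, fun j hj => ?_⟩
  obtain ⟨h0', h1'⟩ := key A hA j
  exact mul_lt_mul'' h1 h1' h0 h0'

end TensorB
end

section
/- If A ∈ T_{m,n} is a circulant tensor, then the following are equivalent: (a) A is a B-tensor; (b) A is a double B-tensor; (c) a_{1...1} − γ_1^+(A) > Σ_{(i_2,...,i_m)≠(1,...,1)} (γ_1^+(A) − a_{1 i_2...i_m}). -/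
/-!
Translating every index by `i` maps row `0` of a circulant tensor bijectively onto row `i`, so
`γ⁺`, the deficiency sum and the diagonal entry are the same in every row. For an arbitrary tensor,
row `i` satisfies the B-condition iff `n^(m-1) γ_i⁺ < ∑_j a_{i j}`, which rearranges to condition
(c) for row `i`; hence (a) ⟺ (c). Condition (c) in every row makes the double-B products strict.
Conversely, for rows `0` and `j ≠ 0` the double-B inequality of a circulant tensor reads `d² < g²`
with `d ≥ 0` the deficiency sum, so `d < g`; when `n = 1` there is no such `j`, but then the
deficiency sum is empty.
-/

open Finset

namespace TensorB

@[simp] lemma diag_zero {n m : ℕ} [NeZero n] : (diag 0 : Fin (m - 1) → Fin n) = 0 := rfl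

lemma diag_add {n m : ℕ} (a b : Fin n) : (diag (a + b) : Fin (m - 1) → Fin n) = diag a + diag b :=
  rfl

section Row

variable {n m : ℕ} (A : Tensor n m) (i : Fin n)

lemma offIdx_eq_erase : offIdx n m i = univ.erase (diag i) :=
  filter_ne' _ _

lemma card_offIdx_add_one : (offIdx n m i).card + 1 = n ^ (m - 1) := by
  rw [offIdx_eq_erase, card_erase_add_one (mem_univ _), card_univ, Fintype.card_fun,
    Fintype.card_fin, Fintype.card_fin]

lemma rowSum_eq_add_sum_offIdx :
    rowSum A i = A i (diag i) + ∑ j ∈ offIdx n m i, A i j := by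
  rw [offIdx_eq_erase, add_sum_erase _ _ (mem_univ _), rowSum]

lemma apply_le_gammaPlus {j} (hj : j ∈ offIdx n m i) : A i j ≤ gammaPlus A i :=
  le_fold_max _ |>.mpr (Or.inr ⟨j, hj, le_rfl⟩)

lemma gammaPlus_lt_iff {c : ℝ} :
    gammaPlus A i < c ↔ 0 < c ∧ ∀ j, j ≠ diag i → A i j < c := by
  simp [gammaPlus, fold_max_lt, offIdx]

lemma defSum_nonneg : 0 ≤ defSum A i :=
  sum_nonneg fun _ hj => sub_nonneg.mpr (apply_le_gammaPlus A i hj)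

lemma defSum_eq_card_mul_sub_sum : defSum A i =
    (offIdx n m i).card * gammaPlus A i - ∑ j ∈ offIdx n m i, A i j := by
  rw [defSum, sum_sub_distrib, sum_const, nsmul_eq_mul]

lemma defSum_lt_iff : defSum A i < A i (diag i) - gammaPlus A i ↔
    (n : ℝ) ^ (m - 1) * gammaPlus A i < rowSum A i := by
  have hcard : ((offIdx n m i).card : ℝ) + 1 = (n : ℝ) ^ (m - 1) := by
    exact_mod_cast card_offIdx_add_one i
  rw [defSum_eq_card_mul_sub_sum, rowSum_eq_add_sum_offIdx, ← hcard]
  constructor <;> intro h <;> linarith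

lemma defSum_eq_zero [Subsingleton (Fin n)] : defSum A i = 0 := by
  have : offIdx n m i = ∅ :=
    filter_eq_empty_iff.mpr fun j _ => not_not.mpr (Subsingleton.elim _ _)
  rw [defSum, this, sum_empty]

end Row

lemma isBTensor_iff_forall_defSum_lt {n m : ℕ} (A : Tensor n m) :
    IsBTensor A ↔ ∀ i, defSum A i < A i (diag i) - gammaPlus A i := by
  refine forall_congr' fun i => ?_
  have hN : (0 : ℝ) < (n : ℝ) ^ (m - 1) := by
    rw [← Nat.cast_pow, ← card_offIdx_add_one i]; positivity
  rw [defSum_lt_iff, ← lt_div_iff₀' hN, gammaPlus_lt_iff, one_div_mul_eq_div,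
    div_pos_iff_of_pos_right hN]

lemma isDoubleBTensor_of_forall_defSum_lt {n m : ℕ} (A : Tensor n m)
    (h : ∀ i, defSum A i < A i (diag i) - gammaPlus A i) : IsDoubleBTensor A := by
  intro i
  have hi0 := defSum_nonneg A i
  exact ⟨by linarith [h i], (h i).le,
    fun j _ => mul_lt_mul'' (h i) (h j) hi0 (defSum_nonneg A j)⟩

lemma offIdx_eq_map {n m : ℕ} [NeZero n] (i : Fin n) :
    offIdx n m i = (offIdx n m 0).map (Equiv.addRight (diag i)).toEmbedding := by
  ext j
  simp only [offIdx, mem_map_equiv, mem_filter, mem_univ, true_and]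
  simp only [Equiv.addRight_symm_apply, ← sub_eq_add_neg, diag_zero, ne_eq, sub_eq_zero]

namespace IsCirculant

variable {n m : ℕ} [NeZero n] {A : Tensor n m}

open Fin.NatCast in
lemma apply_add (hC : IsCirculant A) (i k : Fin n) (j : Fin (m - 1) → Fin n) :
    A (i + k) (j + diag k) = A i j := by
  rw [← Fin.cast_val_eq_self k]
  induction k.val with
  | zero => simp
  | succ t ih =>
    rw [← ih, hC (i + t), Nat.cast_succ, ← add_assoc, diag_add, ← add_assoc]
    rfl

lemma apply_add_diag_self (hC : IsCirculant A) (i : Fin n) (j : Fin (m - 1) → Fin n) :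
    A i (j + diag i) = A 0 j := by
  simpa using hC.apply_add 0 i j

lemma gammaPlus_eq (hC : IsCirculant A) (i : Fin n) : gammaPlus A i = gammaPlus A 0 := by
  rw [gammaPlus, offIdx_eq_map, fold_map]
  exact fold_congr fun j _ => hC.apply_add_diag_self i j

lemma defSum_eq (hC : IsCirculant A) (i : Fin n) : defSum A i = defSum A 0 := by
  rw [defSum, offIdx_eq_map, sum_map]
  exact sum_congr rfl fun j _ => by simp [hC.gammaPlus_eq i, hC.apply_add_diag_self i j]

lemma diag_apply_eq (hC : IsCirculant A) (i : Fin n) : A i (diag i) = A 0 (diag 0) := by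
  simpa using hC.apply_add_diag_self i 0

lemma forall_defSum_lt_iff (hC : IsCirculant A) :
    (∀ i, defSum A i < A i (diag i) - gammaPlus A i) ↔
      defSum A 0 < A 0 (diag 0) - gammaPlus A 0 :=
  ⟨fun h => h 0, fun h i => by rwa [hC.defSum_eq, hC.diag_apply_eq, hC.gammaPlus_eq]⟩

lemma isDoubleBTensor_iff (hC : IsCirculant A) :
    IsDoubleBTensor A ↔ defSum A 0 < A 0 (diag 0) - gammaPlus A 0 := by
  refine ⟨fun hDB => ?_,
    fun h => isDoubleBTensor_of_forall_defSum_lt A (hC.forall_defSum_lt_iff.mpr h)⟩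
  obtain ⟨hpos, -, hprod⟩ := hDB 0
  rcases subsingleton_or_nontrivial (Fin n)
  · rw [defSum_eq_zero]; linarith
  obtain ⟨j, hj⟩ := exists_ne (0 : Fin n)
  have hsq := hprod j hj
  rw [hC.defSum_eq j, hC.diag_apply_eq j, hC.gammaPlus_eq j] at hsq
  exact (mul_self_lt_mul_self_iff (defSum_nonneg A 0) (by linarith)).mpr hsq

end IsCirculant

theorem stmt7 {n m : ℕ} [NeZero n] (A : Tensor n m) (hC : IsCirculant A) :
    (IsBTensor A ↔ IsDoubleBTensor A) ∧
    (IsDoubleBTensor A ↔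
      defSum A 0 < A 0 (diag 0) - gammaPlus A 0) := by
  rw [hC.isDoubleBTensor_iff, isBTensor_iff_forall_defSum_lt, hC.forall_defSum_lt_iff]
  exact ⟨.rfl, .rfl⟩

end TensorB
end

section
/- An interval tensor A^I = [A̲, A̅] in T_{m,n} is an interval B-tensor if and only if for all i_1 ∈ [n]: (a) Σ_{i_2,...,i_m∈[n]} a̲_{i_1 i_2...i_m} > 0, and (b) for all (j_2,...,j_m) ≠ (i_1,...,i_1), a̲_{i_1...i_1} − a̅_{i_1 j_2...j_m} > Σ_{(i_2,...,i_m)≠(i_1,...,i_1), (i_2,...,i_m)≠(j_2,...,j_m)} (a̅_{i_1 j_2...j_m} − a̲_{i_1 i_2...i_m}). -/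
open Finset

namespace TensorB

lemma key_s10 {n m : ℕ} (A : Tensor n m) (i : Fin n)
    (jt : Fin (m-1) → Fin n) (hjt : jt ≠ diag i) :
    (A i jt < (1 / (n : ℝ) ^ (m - 1)) * rowSum A i) ↔
      ∑ j ∈ (offIdx n m i).filter (fun j => j ≠ jt), (A i jt - A i j) <
        A i (diag i) - A i jt := by
  have hn : 0 < n := i.pos
  have hc0 : (0:ℝ) < (n : ℝ) ^ (m - 1) := by positivity
  set E := (offIdx n m i).filter (fun j => j ≠ jt) with hEdef
  have hE : E = (Finset.univ.erase (diag i)).erase jt := by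
    simp [hEdef, offIdx, Finset.filter_ne', Finset.filter_filter, Finset.erase_eq,
      Finset.filter_and]
  have hjE : jt ∈ Finset.univ.erase (diag i) := Finset.mem_erase.2 ⟨hjt, Finset.mem_univ _⟩
  have h1 : rowSum A i = A i (diag i) + (A i jt + ∑ j ∈ E, A i j) := by
    rw [hE, rowSum, ← Finset.add_sum_erase _ _ (Finset.mem_univ (diag i)),
        ← Finset.add_sum_erase _ _ hjE]
  have hsum : ∑ j ∈ E, (A i jt - A i j) = E.card * A i jt - ∑ j ∈ E, A i j := by
    rw [Finset.sum_sub_distrib, Finset.sum_const, nsmul_eq_mul]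
  have hcard : (E.card : ℝ) + 2 = (n:ℝ) ^ (m-1) := by
    have h2 : E.card + 1 = ((Finset.univ : Finset (Fin (m-1) → Fin n)).erase (diag i)).card := by
      rw [hE]; exact Finset.card_erase_add_one hjE
    have h3 : ((Finset.univ : Finset (Fin (m-1) → Fin n)).erase (diag i)).card + 1
        = (Finset.univ : Finset (Fin (m-1) → Fin n)).card :=
      Finset.card_erase_add_one (Finset.mem_univ _)
    have h4 : (Finset.univ : Finset (Fin (m-1) → Fin n)).card = n ^ (m-1) := by
      simp [Finset.card_univ]
    have h5 : E.card + 2 = n ^ (m-1) := by omega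
    have h6 := congrArg (Nat.cast (R := ℝ)) h5
    push_cast at h6
    linarith
  rw [hsum, show (1 / (n:ℝ)^(m-1)) * rowSum A i = rowSum A i / (n:ℝ)^(m-1) by ring,
     lt_div_iff₀ hc0, h1, ← hcard]
  constructor <;> intro hh <;> nlinarith [hh]

theorem stmt10 {n m : ℕ} (L U : Tensor n m) (hLU : IntervalValid L U) :
    (∀ A, Mem L U A → IsBTensor A) ↔
      ∀ i : Fin n, 0 < rowSum L i ∧
        ∀ jt, jt ≠ diag i →
          ∑ j ∈ (offIdx n m i).filter (fun j => j ≠ jt), (U i jt - L i j) <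
            L i (diag i) - U i jt := by
  classical
  constructor
  · intro h i
    refine ⟨(h L (fun i' j' => ⟨le_refl _, hLU i' j'⟩) i).1, ?_⟩
    intro jt hjt
    set A : Tensor n m := fun i' k => if i' = i ∧ k = jt then U i' k else L i' k with hA
    have hmem : Mem L U A := by
      intro i' k
      by_cases hc : i' = i ∧ k = jt
      · simp only [hA, if_pos hc]
        exact ⟨hLU i' k, le_refl _⟩
      · simp only [hA, if_neg hc]
        exact ⟨le_refl _, hLU i' k⟩
    have hB := (h A hmem i).2 jt hjt
    rw [key_s10 A i jt hjt] at hB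
    have e1 : A i jt = U i jt := if_pos ⟨rfl, rfl⟩
    have ed : A i (diag i) = L i (diag i) := if_neg (by rintro ⟨-, h'⟩; exact hjt h'.symm)
    have hsum_eq : ∑ j ∈ (offIdx n m i).filter (fun j => j ≠ jt), (A i jt - A i j)
        = ∑ j ∈ (offIdx n m i).filter (fun j => j ≠ jt), (U i jt - L i j) := by
      refine Finset.sum_congr rfl fun j hj => ?_
      have hjne : j ≠ jt := (Finset.mem_filter.1 hj).2
      rw [e1, show A i j = L i j from if_neg (fun hc => hjne hc.2)]
    rw [hsum_eq, e1, ed] at hB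
    exact hB
  · intro h A hmem i
    obtain ⟨h0, hoff⟩ := h i
    constructor
    · have hle : rowSum L i ≤ rowSum A i := Finset.sum_le_sum fun j _ => (hmem i j).1
      linarith
    · intro jt hjt
      rw [key_s10 A i jt hjt]
      have hx := hoff jt hjt
      have hle : ∑ j ∈ (offIdx n m i).filter (fun j => j ≠ jt), (A i jt - A i j)
          ≤ ∑ j ∈ (offIdx n m i).filter (fun j => j ≠ jt), (U i jt - L i j) :=
        Finset.sum_le_sum fun j _ => sub_le_sub (hmem i jt).2 (hmem i j).1
      have h2 : L i (diag i) - U i jt ≤ A i (diag i) - A i jt :=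
        sub_le_sub (hmem i (diag i)).1 (hmem i jt).2
      linarith


end TensorB
end

section
/- Let A^I and B^I be interval tensors in T_{m,n} such that B̲ and B̅ agree with A̲ on all diagonal entries (i.e., b̲_{i...i} = b̅_{i...i} = a̲_{i...i} for all i) and agree with A̲, A̅ respectively on all off-diagonal entries. Then A^I is an interval B-tensor if and only if B^I is an interval B-tensor. -/
open Finset

namespace TensorB

lemma rowSum_diff {n m : ℕ} (A A' : Tensor n m)
    (hoff : ∀ (i : Fin n) j, j ≠ diag i → A' i j = A i j) (i : Fin n) :
    rowSum A' i = rowSum A i + (A' i (diag i) - A i (diag i)) := by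
  have : rowSum A' i - rowSum A i = A' i (diag i) - A i (diag i) := by
    rw [rowSum, rowSum, ← Finset.sum_sub_distrib]
    exact Fintype.sum_eq_single (diag i) (fun j hj => by rw [hoff i j hj]; ring)
  linarith

lemma mono_B {n m : ℕ} (A A' : Tensor n m)
    (hoff : ∀ (i : Fin n) j, j ≠ diag i → A' i j = A i j)
    (hdiag : ∀ i : Fin n, A i (diag i) ≤ A' i (diag i))
    (hA : IsBTensor A) : IsBTensor A' := by
  intro i
  obtain ⟨h1, h2⟩ := hA i
  have hrs : rowSum A i ≤ rowSum A' i := by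
    rw [rowSum_diff A A' hoff i]; linarith [hdiag i]
  have hc : (0:ℝ) ≤ 1 / (n : ℝ) ^ (m - 1) := by positivity
  refine ⟨lt_of_lt_of_le h1 hrs, fun j hj => ?_⟩
  calc A' i j = A i j := hoff i j hj
    _ < (1 / (n : ℝ) ^ (m - 1)) * rowSum A i := h2 j hj
    _ ≤ (1 / (n : ℝ) ^ (m - 1)) * rowSum A' i := mul_le_mul_of_nonneg_left hrs hc

theorem stmt11 {n m : ℕ} (La Ua Lb Ub : Tensor n m)
    (hA : IntervalValid La Ua) (hB : IntervalValid Lb Ub)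
    (hdiag : ∀ i : Fin n, Lb i (diag i) = La i (diag i) ∧ Ub i (diag i) = La i (diag i))
    (hoff : ∀ (i : Fin n) j, j ≠ diag i → Lb i j = La i j ∧ Ub i j = Ua i j) :
    (∀ A, Mem La Ua A → IsBTensor A) ↔ (∀ A, Mem Lb Ub A → IsBTensor A) := by
  constructor
  · intro h B hMem
    apply h
    intro i j
    by_cases hj : j = diag i
    · subst hj
      obtain ⟨hb1, hb2⟩ := hdiag i
      obtain ⟨m1, m2⟩ := hMem i (diag i)
      constructor
      · rw [← hb1]; exact m1
      · rw [hb2] at m2; exact le_trans m2 (hA i (diag i))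
    · obtain ⟨hb1, hb2⟩ := hoff i j hj
      obtain ⟨m1, m2⟩ := hMem i j
      exact ⟨by rw [← hb1]; exact m1, by rw [← hb2]; exact m2⟩
  · intro h A hMem
    set B : Tensor n m := fun i j => if j = diag i then La i (diag i) else A i j with hBdef
    have hBoff : ∀ (i : Fin n) j, j ≠ diag i → B i j = A i j := by
      intro i j hj; simp [hBdef, hj]
    have hBB : IsBTensor B := by
      apply h
      intro i j
      by_cases hj : j = diag i
      · subst hj
        obtain ⟨hb1, hb2⟩ := hdiag i
        simp [hBdef, hb1, hb2]
      · rw [hBoff i j hj]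
        obtain ⟨hb1, hb2⟩ := hoff i j hj
        obtain ⟨m1, m2⟩ := hMem i j
        exact ⟨by rw [hb1]; exact m1, by rw [hb2]; exact m2⟩
    apply mono_B B A (fun i j hj => (hBoff i j hj).symm)
    · intro i
      simp only [hBdef, if_pos rfl]
      exact (hMem i (diag i)).1
    · exact hBB

end TensorB
end

section
/- If A^I = [A̲, A̅] is an interval B-tensor in T_{m,n}, then the tensor A' defined by a'_{i_1 i_2...i_m} = a̲_{i_1...i_1} when i_1 = i_2 = ... = i_m and a'_{i_1 i_2...i_m} = a̅_{i_1 i_2...i_m} otherwise, is a B-tensor; consequently, for all i_1, a̲_{i_1...i_1} > max{0, a̅_{i_1 i_2...i_m} : (i_2,...,i_m) ≠ (i_1,...,i_1)}. -/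
open Finset

namespace TensorB

theorem stmt14 {n m : ℕ} (L U : Tensor n m) (hLU : IntervalValid L U)
    (hIB : ∀ A, Mem L U A → IsBTensor A) :
    IsBTensor (fun i j => if j = diag i then L i j else U i j) ∧
    ∀ i : Fin n, gammaPlus U i < L i (diag i) := by
  set A' : Tensor n m := fun i j => if j = diag i then L i j else U i j with hA'
  have hmem : Mem L U A' := by
    intro i j
    by_cases h : j = diag i
    · refine ⟨?_, ?_⟩ <;> simp [A', h]
      exact hLU i _
    · refine ⟨?_, ?_⟩ <;> simp [A', h]
      exact hLU i j
  have hB := hIB A' hmem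
  refine ⟨hB, ?_⟩
  intro i
  obtain ⟨hS, hoff⟩ := hB i
  have hn : 0 < n := i.pos
  set t : ℝ := (n : ℝ) ^ (m - 1) with ht
  have ht0 : 0 < t := by positivity
  have hdiag_mem : diag i ∈ (univ : Finset (Fin (m-1) → Fin n)) := mem_univ _
  have hsplit : rowSum A' i = A' i (diag i) + ∑ j ∈ offIdx n m i, A' i j := by
    rw [rowSum, offIdx, filter_ne']
    exact (Finset.add_sum_erase _ _ hdiag_mem).symm
  have hcard : ((offIdx n m i).card : ℝ) = t - 1 := by
    rw [offIdx, filter_ne', Finset.card_erase_of_mem hdiag_mem, card_univ]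
    have : Fintype.card (Fin (m-1) → Fin n) = n ^ (m-1) := by
      simp [Fintype.card_fun]
    rw [this, ht]
    have h1 : 1 ≤ n ^ (m-1) := Nat.one_le_pow _ _ hn
    push_cast [h1]
    ring
  have hsum_le : ∑ j ∈ offIdx n m i, A' i j ≤ (t-1) * ((1/t) * rowSum A' i) := by
    rw [← hcard]
    calc ∑ j ∈ offIdx n m i, A' i j
        ≤ ∑ _j ∈ offIdx n m i, (1/t) * rowSum A' i :=
          Finset.sum_le_sum fun j hj =>
            le_of_lt (hoff j (by simpa [offIdx] using hj))
      _ = _ := by rw [Finset.sum_const, nsmul_eq_mul]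
  have hkey : (1/t) * rowSum A' i ≤ A' i (diag i) := by
    have h1 : rowSum A' i ≤ A' i (diag i) + (t-1) * ((1/t) * rowSum A' i) :=
      by linarith [hsplit, hsum_le]
    have h2 : (t-1) * ((1/t) * rowSum A' i) = rowSum A' i - (1/t) * rowSum A' i := by
      field_simp
    linarith
  have hA'd : A' i (diag i) = L i (diag i) := by simp [A']
  have hdpos : 0 < L i (diag i) := by
    rw [← hA'd]
    exact lt_of_lt_of_le (by positivity) hkey
  rw [gammaPlus, Finset.fold_max_lt]
  refine ⟨hdpos, fun j hj => ?_⟩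
  have hjne : j ≠ diag i := by simpa [offIdx] using hj
  have h2 := hoff j hjne
  have h3 : U i j < (1/t) * rowSum A' i := by
    simpa [A', hjne] using h2
  rw [← hA'd]
  exact lt_of_lt_of_le h3 hkey

end TensorB
end

section
/- If A^I = [A̲, A̅] is an interval Z-tensor in T_{m,n}, then A^I is an interval double B-tensor if and only if A̲ is a double B-tensor. -/
open Finset

namespace TensorB

lemma gamma_zero {n m : ℕ} {A : Tensor n m} (hA : IsZTensor A) (i : Fin n) :
    gammaPlus A i = 0 := by
  apply le_antisymm
  · exact (Finset.fold_max_le 0).2 ⟨le_rfl, fun j hj => hA i j (Finset.mem_filter.1 hj).2⟩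
  · exact (Finset.le_fold_max 0).2 (Or.inl le_rfl)

theorem stmt16 {n m : ℕ} (L U : Tensor n m) (hLU : IntervalValid L U)
    (hZ : ∀ A, Mem L U A → IsZTensor A) :
    (∀ A, Mem L U A → IsDoubleBTensor A) ↔ IsDoubleBTensor L := by
  have hmemL : Mem L U L := fun i j => ⟨le_rfl, hLU i j⟩
  constructor
  · intro h; exact h L hmemL
  · intro hL A hA
    have hZL := hZ L hmemL
    have hZA := hZ A hA
    have gA : ∀ k, gammaPlus A k = 0 := gamma_zero hZA
    have gL : ∀ k, gammaPlus L k = 0 := gamma_zero hZL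
    have hdef : ∀ k : Fin n, defSum A k ≤ defSum L k := by
      intro k
      unfold defSum
      apply Finset.sum_le_sum
      intro j _
      rw [gA, gL]
      linarith [(hA k j).1]
    have hdefnn : ∀ k : Fin n, 0 ≤ defSum A k := by
      intro k
      unfold defSum
      apply Finset.sum_nonneg
      intro j hj
      rw [gA]
      have := hZA k j (Finset.mem_filter.1 hj).2
      linarith
    have hdiag : ∀ k : Fin n, L k (diag k) ≤ A k (diag k) := fun k => (hA k (diag k)).1
    intro i
    obtain ⟨h1, h2, h3⟩ := hL i
    rw [gL i] at h1 h2
    refine ⟨?_, ?_, ?_⟩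
    · rw [gA]; linarith [hdiag i]
    · rw [gA]; linarith [hdef i, hdiag i]
    · intro j hj
      obtain ⟨h1j, _, _⟩ := hL j
      rw [gL j] at h1j
      have hprod := h3 j hj
      rw [gL i, gL j] at hprod
      rw [gA i, gA j]
      simp only [sub_zero] at *
      calc defSum A i * defSum A j ≤ defSum L i * defSum L j :=
            mul_le_mul (hdef i) (hdef j) (hdefnn j) (le_trans (hdefnn i) (hdef i))
        _ < L i (diag i) * L j (diag j) := hprod
        _ ≤ A i (diag i) * A j (diag j) :=
            mul_le_mul (hdiag i) (hdiag j) (le_of_lt h1j)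
              (le_trans (le_of_lt h1) (hdiag i))

end TensorB
end

section
/- Let A^I = [A̲, A̅] be an interval tensor in T_{m,n}, and define K as the set of tuples (i_1,j_2,...,j_m) with (j_2,...,j_m) ≠ (i_1,...,i_1) for which there exists an off-diagonal tuple (i_2,...,i_m) ≠ (i_1,...,i_1), (i_2,...,i_m) ≠ (j_2,...,j_m) with a̅_{i_1 j_2...j_m} ≤ a̲_{i_1 i_2...i_m}. Let B^I be obtained from A^I by collapsing the interval at every position in K to the single value a̲ (i.e., b̲ = b̅ = a̲ on K, and b̲ = a̲, b̅ = a̅ elsewhere). Then A^I is an interval B-tensor if and only if B^I is an interval B-tensor. -/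
open Finset

namespace TensorB

theorem stmt18 {n m : ℕ} (L U UB : Tensor n m) (hLU : IntervalValid L U)
    (hUB : ∀ (i : Fin n) (j : Fin (m-1) → Fin n),
      ((j ≠ diag i ∧ ∃ k, k ≠ diag i ∧ k ≠ j ∧ U i j ≤ L i k) → UB i j = L i j) ∧
      (¬(j ≠ diag i ∧ ∃ k, k ≠ diag i ∧ k ≠ j ∧ U i j ≤ L i k) → UB i j = U i j)) :
    (∀ A, Mem L U A → IsBTensor A) ↔ (∀ A, Mem L UB A → IsBTensor A) := by
  have hUBle : ∀ i j, UB i j ≤ U i j := by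
    intro i j
    rcases hUB i j with ⟨h1, h2⟩
    by_cases hK : (j ≠ diag i ∧ ∃ k, k ≠ diag i ∧ k ≠ j ∧ U i j ≤ L i k)
    · rw [h1 hK]; exact hLU i j
    · rw [h2 hK]
  have hLUB : ∀ i j, L i j ≤ UB i j := by
    intro i j
    rcases hUB i j with ⟨h1, h2⟩
    by_cases hK : (j ≠ diag i ∧ ∃ k, k ≠ diag i ∧ k ≠ j ∧ U i j ≤ L i k)
    · rw [h1 hK]
    · rw [h2 hK]; exact hLU i j
  constructor
  · intro h A hA
    exact h A (fun i j => ⟨(hA i j).1, (hA i j).2.trans (hUBle i j)⟩)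
  · intro h A hA
    intro i
    set A' : Tensor n m := fun i j => min (A i j) (UB i j) with hA'def
    have hA' : Mem L UB A' := by
      intro i j
      exact ⟨le_min (hA i j).1 (hLUB i j), min_le_right _ _⟩
    obtain ⟨hpos, hoff⟩ := h A' hA' i
    have hsumle : rowSum A' i ≤ rowSum A i := by
      apply Finset.sum_le_sum
      intro j _
      exact min_le_left _ _
    have hc : (0:ℝ) ≤ 1 / (n : ℝ) ^ (m - 1) := by positivity
    have havg : (1 / (n : ℝ) ^ (m - 1)) * rowSum A' i ≤
        (1 / (n : ℝ) ^ (m - 1)) * rowSum A i := by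
      exact mul_le_mul_of_nonneg_left hsumle hc
    refine ⟨lt_of_lt_of_le hpos hsumle, ?_⟩
    intro j hj
    by_cases hK : (j ≠ diag i ∧ ∃ k, k ≠ diag i ∧ k ≠ j ∧ U i j ≤ L i k)
    · obtain ⟨_, k, hk, hkj, hULk⟩ := hK
      have hkey : A i j ≤ A' i k := by
        apply le_min
        · exact ((hA i j).2.trans hULk).trans (hA i k).1
        · exact ((hA i j).2.trans hULk).trans (hLUB i k)
      exact lt_of_le_of_lt hkey ((hoff k hk).trans_le havg)
    · have heq : A' i j = A i j := by
        rw [hA'def]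
        simp only
        rw [(hUB i j).2 hK]
        exact min_eq_left (hA i j).2
      have := hoff j hj
      rw [heq] at this
      exact this.trans_le havg

end TensorB
end
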